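/- If a self-modified ascent sequence a corresponds under the bijection f_AM to the d×d upper-triangular Fishburn matrix M = (m_{ij}), then a equals the concatenation (0^{m_{11}}, 1^{m_{22}}, 0^{m_{12}}, 2^{m_{33}}, 1^{m_{23}}, 0^{m_{13}}, ..., (d-1)^{m_{dd}}, (d-2)^{m_{d-1,d}}, ..., 0^{m_{1d}}), where i^j denotes j copies of i, and the dual ascent sequence a* (corresponding to the reflection of M through its antidiagonal) equals (0^{m_{dd}}, 1^{m_{d-1,d-1}}, 0^{m_{d-1,d}}, ..., (d-1)^{m_{11}}, (d-2)^{m_{12}}, ..., 0^{m_{1d}}). -/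

import Mathlib

def ascents (l : List ℕ) : ℕ :=
  ((l.zip l.tail).filter (fun p => p.1 < p.2)).length

def IsAscSeq (l : List ℕ) : Prop :=
  l.getD 0 0 = 0 ∧
  ∀ k, k < l.length → 0 < k → l.getD k 0 ≤ ascents (l.take k) + 1

def IsRGF (l : List ℕ) : Prop :=
  l.getD 0 0 = 0 ∧
  ∀ k, k < l.length → ∀ j, l.getD k 0 = j + 1 → ∃ i, i < k ∧ l.getD i 0 = j

def SelfModified (l : List ℕ) : Prop :=
  IsAscSeq l ∧
  ∀ k, k < l.length → 0 < k →
    l.getD k 0 ≤ l.getD (k - 1) 0 ∨ l.getD k 0 = ascents (l.take k) + 1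

def Contains101 (l : List ℕ) : Prop :=
  ∃ i j k, i < j ∧ j < k ∧ k < l.length ∧
    l.getD i 0 = l.getD k 0 ∧ l.getD j 0 < l.getD k 0

def Contains0101 (l : List ℕ) : Prop :=
  ∃ i j k m, i < j ∧ j < k ∧ k < m ∧ m < l.length ∧
    l.getD i 0 = l.getD k 0 ∧ l.getD j 0 = l.getD m 0 ∧ l.getD i 0 < l.getD j 0

def Contains1010 (l : List ℕ) : Prop :=
  ∃ i j k m, i < j ∧ j < k ∧ k < m ∧ m < l.length ∧
    l.getD i 0 = l.getD k 0 ∧ l.getD j 0 = l.getD m 0 ∧ l.getD j 0 < l.getD i 0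

/-- The view of position `i` in the sequence `a`: the number of indices `j > i` such
that `a j` strictly exceeds all entries `a k` for `i ≤ k < j`.  This agrees with the
recursive definition `v i = v j + 1` for `j` the least index `> i` with `a j > a i`. -/
def view {α : Type*} [LinearOrder α] [Inhabited α] (a : List α) (i : ℕ) : ℕ :=
  ((List.range a.length).filter (fun j =>
    decide (i < j ∧ ∀ k, k < j → i ≤ k → a.getD k default < a.getD j default))).length

/-- The panorama of `a`: the views of the positions of `a`, listed grouped by entry
value from largest value to smallest, positions within a group in increasing order. -/
def pan {α : Type*} [LinearOrder α] [Inhabited α] (a : List α) : List ℕ :=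
  ((List.range a.length).mergeSort (fun i j =>
    decide (a.getD j default < a.getD i default ∨
      (a.getD i default = a.getD j default ∧ i ≤ j)))).map (view a)

/-- A square matrix of natural numbers, given by a dimension and an entry function
(indices are 0-based; entries with an index `≥ d` are irrelevant/zero). -/
structure FMat where
  d : ℕ
  entry : ℕ → ℕ → ℕ

/-- 0-based index of the first row whose rightmost entry is nonzero. -/
noncomputable def mindex (M : FMat) : ℕ :=
  sInf {i | M.entry i (M.d - 1) ≠ 0}

/-- One step of the recursive bijection from ascent sequences to Fishburn matrices,
with cases AM1, AM2, AM3 (0-based indices). -/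
noncomputable def fStep (M : FMat) (a : ℕ) : FMat :=
  if a ≤ mindex M then
    -- AM1: increase entry (a, d-1)
    ⟨M.d, fun i j => M.entry i j + if i = a ∧ j = M.d - 1 then 1 else 0⟩
  else if a = M.d then
    -- AM2: append a new row and column, with 1 in the new diagonal entry
    ⟨M.d + 1, fun i j =>
      if i = M.d ∨ j = M.d then (if i = M.d ∧ j = M.d then 1 else 0)
      else M.entry i j⟩
  else
    -- AM3: insert a new row and column at index a
    ⟨M.d + 1, fun i j =>
      if i = a then (if j = M.d then 1 else 0)
      else if j = a then (if i < a then M.entry i (M.d - 1) else 0)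
      else if j = M.d ∧ i < a then 0
      else M.entry (if i < a then i else i - 1) (if j < a then j else j - 1)⟩

/-- The map from ascent sequences to Fishburn matrices. -/
noncomputable def fAM (l : List ℕ) : FMat :=
  l.tail.foldl fStep ⟨1, fun i j => if i = 0 ∧ j = 0 then 1 else 0⟩

/-- Fishburn matrix: upper triangular (and supported on `[0,d) × [0,d)`),
with no zero row and no zero column. -/
def IsFishburn (M : FMat) : Prop :=
  (∀ i j, (M.d ≤ i ∨ M.d ≤ j ∨ j < i) → M.entry i j = 0) ∧
  (∀ i, i < M.d → ∃ j, j < M.d ∧ M.entry i j ≠ 0) ∧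
  (∀ j, j < M.d → ∃ i, i < M.d ∧ M.entry i j ≠ 0)

def entrySum (M : FMat) : ℕ :=
  ∑ i ∈ Finset.range M.d, ∑ j ∈ Finset.range M.d, M.entry i j

/-- Reflection of a matrix through its antidiagonal. -/
def reflect (M : FMat) : FMat :=
  ⟨M.d, fun i j => if i < M.d ∧ j < M.d then M.entry (M.d - 1 - j) (M.d - 1 - i) else 0⟩

/-- The canonical sequence `(0^{m₀₀}, 1^{m₁₁}, 0^{m₀₁}, 2^{m₂₂}, 1^{m₁₂}, 0^{m₀₂}, …)`
(0-based indices) associated to a matrix; this is `f_MA(M)` for `M ∈ RMatrices`. -/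
def canonSeq (M : FMat) : List ℕ :=
  (List.range M.d).flatMap (fun j =>
    (List.range (j + 1)).reverse.flatMap (fun i => List.replicate (M.entry i j) i))

/-- The dual canonical sequence
`(0^{m_{d-1,d-1}}, 1^{m_{d-2,d-2}}, 0^{m_{d-2,d-1}}, …, (d-1)^{m_{0,0}}, …, 0^{m_{0,d-1}})`,
i.e. `f_MA` applied to the antidiagonal reflection of `M`. -/
def dualCanonSeq (M : FMat) : List ℕ :=
  (List.range M.d).flatMap (fun j =>
    (List.range (j + 1)).reverse.flatMap (fun i =>
      List.replicate (M.entry (M.d - 1 - j) (M.d - 1 - i)) i))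

/-- A matrix is SE-free if it has no pair of nonzero entries `m i j`, `m i' j'`
with `i < i'`, `j < j'` and `i' ≤ j`. -/
def SEFree (M : FMat) : Prop :=
  ¬ ∃ i j i' j', i < i' ∧ j < j' ∧ i' ≤ j ∧ j' < M.d ∧
    M.entry i j ≠ 0 ∧ M.entry i' j' ≠ 0

/-- Generalized ballot sequence (Yamanouchi word): in every prefix, each value `j+1`
occurs at most as often as `j`. -/
def IsBallot (l : List ℕ) : Prop :=
  ∀ k j, (l.take k).count (j + 1) ≤ (l.take k).count j

/-!
Every step of `fAM` along a self-modified sequence is of type AM1 or AM2, never AM3: an entry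
`x` not exceeding its predecessor adds `1` at row `x` of the last column (above every nonzero
entry there), and a new maximum `asc + 1` opens a new column with a `1` on the diagonal. So
`fAM a` is upper triangular with positive diagonal, and `a` writes the columns down one after
the other, each read bottom to top, which is `canonSeq`. Conversely, for any such matrix `M`
the last letter of `canonSeq M` undoes one AM1 or AM2 step, whence `fAM (canonSeq M) = M`.
The antidiagonal reflection of such a matrix is again one, and `dualCanonSeq M` is the
canonical sequence of `reflect M`.
-/

/-- The paper's `RMatrices`: a positive diagonal already makes every row and column nonzero. -/
structure IsRMatrix (M : FMat) : Prop where
  entry_eq_zero : ∀ i j, (M.d ≤ i ∨ M.d ≤ j ∨ j < i) → M.entry i j = 0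
  entry_diag_pos : ∀ i < M.d, 0 < M.entry i i

namespace FMat

/-- Case AM1 of `fStep`. -/
def incLastCol (M : FMat) (x : ℕ) : FMat :=
  ⟨M.d, fun i j => M.entry i j + if i = x ∧ j = M.d - 1 then 1 else 0⟩

/-- Case AM2 of `fStep`. -/
def growDiag (M : FMat) : FMat :=
  ⟨M.d + 1, fun i j =>
    if i = M.d ∨ j = M.d then (if i = M.d ∧ j = M.d then 1 else 0) else M.entry i j⟩

def decLastCol (M : FMat) (x : ℕ) : FMat :=
  ⟨M.d, fun i j => M.entry i j - if i = x ∧ j = M.d - 1 then 1 else 0⟩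

theorem incLastCol_decLastCol {M : FMat} {x : ℕ} (h : M.entry x (M.d - 1) ≠ 0) :
    (M.decLastCol x).incLastCol x = M := by
  simp only [incLastCol, decLastCol]
  congr 1
  funext i j
  by_cases hij : i = x ∧ j = M.d - 1
  · obtain ⟨rfl, rfl⟩ := hij
    simp only [and_self, if_true]
    omega
  · simp [hij]

end FMat

def canonColumn (e : ℕ → ℕ → ℕ) (j : ℕ) : List ℕ :=
  (List.range (j + 1)).reverse.flatMap fun i => List.replicate (e i j) i

theorem canonSeq_mk (d : ℕ) (e : ℕ → ℕ → ℕ) :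
    canonSeq ⟨d, e⟩ = (List.range d).flatMap (canonColumn e) := rfl

theorem canonSeq_succ (d : ℕ) (e : ℕ → ℕ → ℕ) :
    canonSeq ⟨d + 1, e⟩ = canonSeq ⟨d, e⟩ ++ canonColumn e d := by
  simp [canonSeq_mk, List.range_succ]

theorem canonSeq_congr {d : ℕ} {e e' : ℕ → ℕ → ℕ}
    (h : ∀ i j, i ≤ j → j < d → e i j = e' i j) :
    canonSeq ⟨d, e⟩ = canonSeq ⟨d, e'⟩ := by
  refine List.flatMap_congr fun j hj => List.flatMap_congr fun i hi => ?_
  simp only [List.mem_range, List.mem_reverse] at hi hj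
  exact congrArg (List.replicate · i) (h i j (by omega) hj)

theorem canonSeq_ne_nil {M : FMat} (hM : IsRMatrix M) (hd : 0 < M.d) : canonSeq M ≠ [] := by
  refine List.ne_nil_of_mem (a := M.d - 1) ?_
  simp only [canonSeq, List.mem_flatMap, List.mem_range, List.mem_reverse, List.mem_replicate]
  exact ⟨M.d - 1, by omega, M.d - 1, by omega, (hM.entry_diag_pos _ (by omega)).ne', rfl⟩

theorem flatMap_reverse_range_replicate_add_ite {f : ℕ → ℕ} {x n : ℕ} (hxn : x < n)
    (hf : ∀ i < x, f i = 0) :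
    (List.range n).reverse.flatMap (fun i => List.replicate (f i + if i = x then 1 else 0) i) =
      (List.range n).reverse.flatMap (fun i => List.replicate (f i) i) ++ [x] := by
  induction n with
  | zero => omega
  | succ n ih =>
    simp only [List.range_succ, List.reverse_append, List.reverse_singleton,
      List.singleton_append, List.flatMap_cons]
    rcases (Nat.lt_succ_iff.1 hxn).eq_or_lt with rfl | hlt
    · have hnil : ∀ g : ℕ → ℕ, (∀ i < x, g i = 0) →
          (List.range x).reverse.flatMap (fun i => List.replicate (g i) i) = [] := by
        intro g hg
        simp +contextual [List.flatMap_eq_nil_iff, hg]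
      rw [hnil _ fun i hi => by simp [hf i hi, hi.ne], hnil f hf]
      simp [List.replicate_succ']
    · rw [if_neg hlt.ne', add_zero, ih hlt, List.append_assoc]

theorem canonSeq_incLastCol {M : FMat} {x : ℕ} (hx : x < M.d)
    (h0 : ∀ i < x, M.entry i (M.d - 1) = 0) :
    canonSeq (M.incLastCol x) = canonSeq M ++ [x] := by
  obtain ⟨d, e⟩ := M
  obtain ⟨k, rfl⟩ : ∃ k, d = k + 1 := ⟨d - 1, by simp only at hx; omega⟩
  simp only [Nat.add_sub_cancel] at h0
  simp only [FMat.incLastCol, Nat.add_sub_cancel, canonSeq_succ, List.append_assoc]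
  rw [canonSeq_congr (e' := e) fun i j _ hj => by simp [hj.ne]]
  congr 1
  simpa [canonColumn] using
    flatMap_reverse_range_replicate_add_ite (f := fun i => e i k) (n := k + 1) (by omega) h0

theorem canonSeq_growDiag (M : FMat) : canonSeq M.growDiag = canonSeq M ++ [M.d] := by
  rw [FMat.growDiag, canonSeq_succ, canonSeq_congr (e' := M.entry) fun i j hij hj => by
    simp [hj.ne, (hij.trans_lt hj).ne]]
  congr 1
  simp +contextual [canonColumn, List.range_succ, List.flatMap_eq_nil_iff, Nat.ne_of_lt]

theorem dualCanonSeq_eq_canonSeq_reflect (M : FMat) : dualCanonSeq M = canonSeq (reflect M) := by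
  refine List.flatMap_congr fun j hj => List.flatMap_congr fun i hi => ?_
  simp only [List.mem_range, List.mem_reverse] at hi hj
  simp only [reflect]
  rw [if_pos ⟨by omega, hj⟩]

theorem mindex_eq_of_entry_ne_zero {M : FMat} {x : ℕ} (hx : M.entry x (M.d - 1) ≠ 0)
    (h0 : ∀ i < x, M.entry i (M.d - 1) = 0) : mindex M = x := by
  refine le_antisymm (Nat.sInf_le hx) (not_lt.1 fun hlt => ?_)
  exact Nat.sInf_mem (s := {i | M.entry i (M.d - 1) ≠ 0}) ⟨x, hx⟩ (h0 _ hlt)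

theorem mindex_growDiag (M : FMat) : mindex M.growDiag = M.d :=
  mindex_eq_of_entry_ne_zero (by simp [FMat.growDiag]) fun i hi => by
    simp [FMat.growDiag, hi.ne]

theorem mindex_incLastCol {M : FMat} {x : ℕ} (h0 : ∀ i < x, M.entry i (M.d - 1) = 0) :
    mindex (M.incLastCol x) = x :=
  mindex_eq_of_entry_ne_zero (by simp [FMat.incLastCol]) fun i hi => by
    simp [FMat.incLastCol, h0 i hi, hi.ne]

namespace IsRMatrix

variable {M : FMat}

theorem entry_mindex_ne_zero (hM : IsRMatrix M) (hd : 0 < M.d) :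
    M.entry (mindex M) (M.d - 1) ≠ 0 :=
  Nat.sInf_mem (s := {i | M.entry i (M.d - 1) ≠ 0})
    ⟨M.d - 1, (hM.entry_diag_pos _ (by omega)).ne'⟩

theorem mindex_lt (hM : IsRMatrix M) (hd : 0 < M.d) : mindex M < M.d := by
  have : mindex M ≤ M.d - 1 := Nat.sInf_le (hM.entry_diag_pos _ (by omega)).ne'
  omega

theorem le_mindex_iff (hM : IsRMatrix M) (hd : 0 < M.d) {x : ℕ} :
    x ≤ mindex M ↔ ∀ i < x, M.entry i (M.d - 1) = 0 := by
  refine ⟨fun hx i hi => not_not.1 (Nat.notMem_of_lt_sInf (lt_of_lt_of_le hi hx)), fun h0 => ?_⟩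
  by_contra! hlt
  exact hM.entry_mindex_ne_zero hd (h0 _ hlt)

theorem incLastCol (hM : IsRMatrix M) {x : ℕ} (hx : x < M.d) : IsRMatrix (M.incLastCol x) where
  entry_eq_zero i j hij := by
    simp only [FMat.incLastCol] at hij ⊢
    rw [hM.entry_eq_zero i j hij, if_neg (by omega)]
  entry_diag_pos i hi := Nat.lt_add_right _ (hM.entry_diag_pos i hi)

theorem decLastCol (hM : IsRMatrix M) {x : ℕ} (h : x = M.d - 1 → M.entry x x ≠ 1) :
    IsRMatrix (M.decLastCol x) where
  entry_eq_zero i j hij := by simp [FMat.decLastCol, hM.entry_eq_zero i j hij]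
  entry_diag_pos i hi := by
    simp only [FMat.decLastCol] at hi ⊢
    have hpos := hM.entry_diag_pos i hi
    split_ifs with hix
    · obtain ⟨rfl, hlast⟩ := hix
      have := h hlast
      omega
    · omega

theorem growDiag (hM : IsRMatrix M) : IsRMatrix M.growDiag where
  entry_eq_zero i j hij := by
    simp only [FMat.growDiag] at hij ⊢
    split_ifs <;> first | omega | exact hM.entry_eq_zero i j (by omega)
  entry_diag_pos i hi := by
    simp only [FMat.growDiag] at hi ⊢
    split_ifs <;> first | omega | exact hM.entry_diag_pos i (by omega)

theorem reflect (hM : IsRMatrix M) : IsRMatrix (reflect M) where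
  entry_eq_zero i j hij := by
    simp only [_root_.reflect] at hij ⊢
    split_ifs <;> first | rfl | exact hM.entry_eq_zero _ _ (by omega)
  entry_diag_pos i hi := by
    simp only [_root_.reflect] at hi ⊢
    rw [if_pos ⟨hi, hi⟩]
    exact hM.entry_diag_pos _ (by omega)

end IsRMatrix

theorem fStep_of_le_mindex {M : FMat} {x : ℕ} (hx : x ≤ mindex M) :
    fStep M x = M.incLastCol x := by
  rw [fStep, if_pos hx, FMat.incLastCol]

theorem fStep_d_eq_growDiag {M : FMat} (hM : mindex M < M.d) : fStep M M.d = M.growDiag := by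
  rw [fStep, if_neg (by omega), if_pos rfl, FMat.growDiag]

theorem fAM_append_singleton {b : List ℕ} (hb : b ≠ []) (x : ℕ) :
    fAM (b ++ [x]) = fStep (fAM b) x := by
  obtain ⟨c, t, rfl⟩ := List.exists_cons_of_ne_nil hb
  simp [fAM, List.foldl_append]

theorem IsRMatrix.fAM_singleton_zero {M : FMat} (hM : IsRMatrix M) (hd : M.d = 0) :
    fAM [0] = M.growDiag := by
  simp only [fAM, FMat.growDiag, hd, List.tail_cons, List.foldl_nil, FMat.mk.injEq, true_and]
  funext i j
  split_ifs <;> first | omega | exact (hM.entry_eq_zero i j (by omega)).symm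

theorem IsRMatrix.eq_growDiag_or_eq_incLastCol {M : FMat} (hM : IsRMatrix M) (hd : 0 < M.d) :
    (∃ N, IsRMatrix N ∧ M = N.growDiag) ∨
      ∃ N x, IsRMatrix N ∧ 0 < N.d ∧ x ≤ mindex N ∧ M = N.incLastCol x := by
  obtain ⟨d, e⟩ := M
  obtain ⟨k, rfl⟩ : ∃ k, d = k + 1 := ⟨d - 1, by simp only at hd; omega⟩
  set L := mindex ⟨k + 1, e⟩
  have hlow : ∀ i < L, e i k = 0 := (hM.le_mindex_iff hd).1 le_rfl
  have hL : e L k ≠ 0 := hM.entry_mindex_ne_zero hd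
  have hsupp : ∀ i j, (k + 1 ≤ i ∨ k + 1 ≤ j ∨ j < i) → e i j = 0 := hM.entry_eq_zero
  have hdiag : ∀ i ≤ k, 0 < e i i := fun i hi => hM.entry_diag_pos i (Nat.lt_succ_of_le hi)
  by_cases hgrow : L = k ∧ e k k = 1
  · -- the last column is the single entry `1` on the diagonal
    left
    refine ⟨⟨k, fun i j => if i = k ∨ j = k then 0 else e i j⟩,
      ⟨fun i j hij => ?_, fun i hi => ?_⟩, ?_⟩
    · dsimp only at hij ⊢
      split_ifs
      · rfl
      · exact hsupp i j (by omega)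
    · dsimp only at hi ⊢
      rw [if_neg (by omega)]
      exact hdiag i hi.le
    · simp only [FMat.growDiag, FMat.mk.injEq, true_and]
      funext i j
      split_ifs with h1 h2
      · obtain ⟨rfl, rfl⟩ := h2
        exact hgrow.2
      · by_cases hij : i < k ∧ j = k
        · exact hij.2 ▸ hlow i (by omega)
        · exact hsupp i j (by omega)
      · rfl
  · right
    have hN : IsRMatrix (FMat.decLastCol ⟨k + 1, e⟩ L) :=
      hM.decLastCol fun hLlast h => hgrow ⟨hLlast, by simpa [hLlast] using h⟩
    refine ⟨_, L, hN, hd, (hN.le_mindex_iff hd).2 fun i hi => ?_,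
      (FMat.incLastCol_decLastCol hL).symm⟩
    simp [FMat.decLastCol, hlow i hi, hi.ne]

theorem fAM_canonSeq {M : FMat} (hM : IsRMatrix M) (hd : 0 < M.d) : fAM (canonSeq M) = M := by
  generalize hl : canonSeq M = l
  induction l using List.reverseRecOn generalizing M with
  | nil => exact absurd hl (canonSeq_ne_nil hM hd)
  | append_singleton b x ih =>
    rcases hM.eq_growDiag_or_eq_incLastCol hd with ⟨N, hN, rfl⟩ | ⟨N, x', hN, hNd, hx', rfl⟩
    · obtain ⟨rfl, hx⟩ := List.append_inj' ((canonSeq_growDiag N).symm.trans hl) rfl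
      obtain rfl : x = N.d := (List.singleton_inj.1 hx).symm
      rcases Nat.eq_zero_or_pos N.d with hN0 | hNd
      · rw [show canonSeq N = [] by simp [canonSeq, hN0], List.nil_append, hN0,
          hN.fAM_singleton_zero hN0]
      · rw [fAM_append_singleton (canonSeq_ne_nil hN hNd), ih hN hNd rfl,
          fStep_d_eq_growDiag (hN.mindex_lt hNd)]
    · have h0 := (hN.le_mindex_iff hNd).1 hx'
      have hseq := canonSeq_incLastCol (hx'.trans_lt (hN.mindex_lt hNd)) h0
      obtain ⟨rfl, hx⟩ := List.append_inj' (hseq.symm.trans hl) rfl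
      obtain rfl : x = x' := (List.singleton_inj.1 hx).symm
      rw [fAM_append_singleton (canonSeq_ne_nil hN hNd), ih hN hNd rfl, fStep_of_le_mindex hx']

theorem ascents_cons_cons (a b : ℕ) (l : List ℕ) :
    ascents (a :: b :: l) = ascents (b :: l) + if a < b then 1 else 0 := by
  simp only [ascents, List.tail_cons, List.zip_cons_cons, List.filter_cons]
  split <;> simp_all

theorem ascents_append_singleton :
    ∀ {l : List ℕ} {y : ℕ}, l.getLast? = some y → ∀ x,
      ascents (l ++ [x]) = ascents l + if y < x then 1 else 0
  | [a], y, h, x => by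
    obtain rfl : a = y := by simpa using h
    simp only [ascents, List.singleton_append, List.tail_cons, List.zip_cons_cons,
      List.zip_nil_right, List.filter_cons, List.filter_nil]
    split <;> simp_all
  | a :: b :: l, y, h, x => by
    rw [List.getLast?_cons_cons] at h
    rw [List.cons_append, List.cons_append, ascents_cons_cons, ← List.cons_append,
      ascents_append_singleton h, ascents_cons_cons]
    omega

namespace SelfModified

variable {b : List ℕ} {x : ℕ}

theorem of_append_singleton (h : SelfModified (b ++ [x])) (hb : b ≠ []) : SelfModified b := by
  obtain ⟨⟨h0, hasc⟩, hmod⟩ := h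
  have hb0 : 0 < b.length := List.length_pos_iff.2 hb
  refine ⟨⟨?_, fun k hk hk0 => ?_⟩, fun k hk hk0 => ?_⟩
  · rwa [List.getD_append _ _ _ _ hb0] at h0
  · have := hasc k (by simp; omega) hk0
    rwa [List.getD_append _ _ _ _ hk, List.take_append_of_le_length hk.le] at this
  · have := hmod k (by simp; omega) hk0
    rwa [List.getD_append _ _ _ _ hk, List.getD_append _ _ _ _ (by omega),
      List.take_append_of_le_length hk.le] at this

theorem le_or_eq_ascents_add_one {y : ℕ} (h : SelfModified (b ++ [x]))
    (hy : b.getLast? = some y) : x ≤ y ∨ x = ascents b + 1 := by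
  have hb0 : 0 < b.length := List.length_pos_iff.2 (by rintro rfl; simp at hy)
  have hlast : b.getD (b.length - 1) 0 = y := by
    rw [List.getD_eq_getElem?_getD, ← List.getLast?_eq_getElem?, hy, Option.getD_some]
  have := h.2 b.length (by simp) hb0
  rwa [List.getD_append_right _ _ _ _ le_rfl, Nat.sub_self,
    List.getD_append _ _ _ _ (by omega), List.take_append_of_le_length le_rfl,
    List.take_length, hlast] at this

/-- The invariant carried through the induction: the last entry of `a` marks the first
nonzero entry of the last column, and each ascent of `a` opened a new column. -/
theorem exists_canonSeq_eq {a : List ℕ} (ha : SelfModified a) (hne : a ≠ []) :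
    ∃ M, IsRMatrix M ∧ 0 < M.d ∧ canonSeq M = a ∧ ascents a + 1 = M.d ∧
      a.getLast? = some (mindex M) := by
  induction a using List.reverseRecOn with
  | nil => exact absurd rfl hne
  | append_singleton b x ih =>
    rcases eq_or_ne b [] with rfl | hb
    · obtain rfl : x = 0 := by simpa using ha.1.1
      have hzero : IsRMatrix ⟨0, fun _ _ => 0⟩ :=
        ⟨fun _ _ _ => rfl, fun _ hi => absurd hi (Nat.not_lt_zero _)⟩
      refine ⟨_, hzero.growDiag, Nat.succ_pos 0, canonSeq_growDiag _, rfl, ?_⟩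
      rw [mindex_growDiag]
      rfl
    obtain ⟨M, hM, hd, rfl, hasc, hlast⟩ := ih (ha.of_append_singleton hb) hb
    rcases ha.le_or_eq_ascents_add_one hlast with hx | hx
    · have h0 := (hM.le_mindex_iff hd).1 hx
      refine ⟨M.incLastCol x, hM.incLastCol (hx.trans_lt (hM.mindex_lt hd)), hd,
        canonSeq_incLastCol (hx.trans_lt (hM.mindex_lt hd)) h0, ?_, ?_⟩
      · rw [ascents_append_singleton hlast, if_neg (not_lt.2 hx), add_zero]
        exact hasc
      · rw [List.getLast?_concat, mindex_incLastCol h0]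
    · rw [hasc] at hx
      subst hx
      refine ⟨M.growDiag, hM.growDiag, Nat.succ_pos _, canonSeq_growDiag M, ?_, ?_⟩
      · rw [ascents_append_singleton hlast, if_pos (hM.mindex_lt hd), hasc]
        rfl
      · rw [List.getLast?_concat, mindex_growDiag]

end SelfModified

theorem selfModified_canonical_form (a : List ℕ) (M : FMat)
    (ha : SelfModified a) (hne : a ≠ []) (hM : fAM a = M) :
    a = canonSeq M ∧ fAM (dualCanonSeq M) = reflect M := by
  obtain ⟨N, hN, hd, rfl, -⟩ := ha.exists_canonSeq_eq hne
  rw [fAM_canonSeq hN hd] at hM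
  subst hM
  exact ⟨rfl, by rw [dualCanonSeq_eq_canonSeq_reflect, fAM_canonSeq hN.reflect hd]⟩
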